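/- Let n ≥ 2. Assume that for every normalized Loewner chain (f_t)_{t≥0} the Loewner range R(f_t) := ⋃_{u≥0} f_u(𝔹ⁿ) is biholomorphic to ℂⁿ, and that for every normalized Loewner chain and every t ≥ 0 the pair (f_t(𝔹ⁿ), R(f_t)) is a Runge pair. Then [EXT] implies [FBR_a]. -/

import Mathlib

/-!
For `f ∈ S` and `0 < r < 1`, the rescaling `f_r` extends univalently to the ball of radius
`1 / r > 1`, so by [EXT] it is the initial element of a normalized Loewner chain `F`. By the
hypotheses, `(f_r(𝔹ⁿ), R(F))` is a Runge pair and `R(F)` is biholomorphic to `ℂⁿ`. Both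
properties survive the dilation `z ↦ r z`, which maps `f_r(𝔹ⁿ)` onto `f(r𝔹ⁿ)`; hence
`Ω_r = r · R(F)` works.
-/

open Set Metric Filter

noncomputable section

/-- `E n` is `ℂⁿ` with the Euclidean norm. -/
abbrev E (n : ℕ) := EuclideanSpace ℂ (Fin n)

/-- A map is univalent on `D` if it is holomorphic and injective on `D`. -/
def Univalent {n : ℕ} (f : E n → E n) (D : Set (E n)) : Prop :=
  DifferentiableOn ℂ f D ∧ Set.InjOn f D

/-- The class `S` of normalized univalent maps of the unit ball. -/
def classS (n : ℕ) : Set (E n → E n) :=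
  {f | Univalent f (ball 0 1) ∧ f 0 = 0 ∧
    fderiv ℂ f 0 = ContinuousLinearMap.id ℂ (E n)}

/-- The class `S(ℂⁿ)` of normalized entire univalent maps. -/
def classSC (n : ℕ) : Set (E n → E n) :=
  {Ψ | Differentiable ℂ Ψ ∧ Function.Injective Ψ ∧ Ψ 0 = 0 ∧
    fderiv ℂ Ψ 0 = ContinuousLinearMap.id ℂ (E n)}

/-- A normalized Loewner chain on the unit ball. -/
def IsLoewnerChain {n : ℕ} (f : ℝ → E n → E n) : Prop :=
  ContinuousOn (fun p : ℝ × E n => f p.1 p.2) (Ici 0 ×ˢ ball 0 1) ∧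
  (∀ t, 0 ≤ t → Univalent (f t) (ball 0 1)) ∧
  (∀ s t, 0 ≤ s → s ≤ t → f s '' ball 0 1 ⊆ f t '' ball 0 1) ∧
  (∀ t, 0 ≤ t → f t 0 = 0 ∧
    fderiv ℂ (f t) 0 = (Real.exp t : ℂ) • ContinuousLinearMap.id ℂ (E n))

/-- The class `S¹` of maps embedding into a normalized Loewner chain. -/
def classS1 (n : ℕ) : Set (E n → E n) :=
  {f | f ∈ classS n ∧ ∃ F : ℝ → E n → E n, IsLoewnerChain F ∧
    Set.EqOn (F 0) f (ball 0 1)}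

/-- Uniform convergence on all compact subsets of `D`. -/
def ConvUnifOnCompacts {α β : Type*} [TopologicalSpace α] [UniformSpace β]
    (F : ℕ → α → β) (f : α → β) (D : Set α) : Prop :=
  ∀ K, K ⊆ D → IsCompact K → TendstoUniformlyOn F f atTop K

/-- `(D, Ω)` is a Runge pair. -/
def RungePair {n : ℕ} (D Ω : Set (E n)) : Prop :=
  D ⊆ Ω ∧ ∀ h : E n → ℂ, DifferentiableOn ℂ h D →
    ∃ g : ℕ → E n → ℂ, (∀ k, DifferentiableOn ℂ (g k) Ω) ∧
      ConvUnifOnCompacts g h D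

/-- `D` is Runge in `ℂⁿ`. -/
def IsRunge {n : ℕ} (D : Set (E n)) : Prop := RungePair D univ

/-- An automorphism of `ℂⁿ`. -/
def IsAutomorphism {n : ℕ} (Φ : E n → E n) : Prop :=
  Differentiable ℂ Φ ∧ Function.Bijective Φ

/-- A normalized automorphism of `ℂⁿ`. -/
def IsNormalizedAutomorphism {n : ℕ} (Φ : E n → E n) : Prop :=
  IsAutomorphism Φ ∧ Φ 0 = 0 ∧ fderiv ℂ Φ 0 = ContinuousLinearMap.id ℂ (E n)

/-- `Ω` is biholomorphic to `ℂⁿ`. -/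
def BiholToCn {n : ℕ} (Ω : Set (E n)) : Prop :=
  ∃ Ψ : E n → E n, Differentiable ℂ Ψ ∧ Function.Injective Ψ ∧ Set.range Ψ = Ω

/-- A Fatou–Bieberbach domain: a proper subdomain of `ℂⁿ` biholomorphic to `ℂⁿ`. -/
def IsFatouBieberbach {n : ℕ} (Ω : Set (E n)) : Prop :=
  Ω ≠ univ ∧ BiholToCn Ω

/-- The rescaling `f_r(z) = (1/r) f (r z)`. -/
def rescale {n : ℕ} (f : E n → E n) (r : ℝ) (z : E n) : E n :=
  (r : ℂ)⁻¹ • f ((r : ℂ) • z)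

/-- The Loewner range of a chain. -/
def LoewnerRange {n : ℕ} (f : ℝ → E n → E n) : Set (E n) :=
  ⋃ u ∈ Ici (0 : ℝ), f u '' ball 0 1

/-- (AL): the Andersén–Lempert approximation theorem for maps in `S` with Runge image. -/
def AL (n : ℕ) : Prop :=
  ∀ f ∈ classS n, IsRunge (f '' ball 0 1) →
    ∃ Φ : ℕ → E n → E n, (∀ k, IsNormalizedAutomorphism (Φ k)) ∧
      ConvUnifOnCompacts Φ f (ball (0 : E n) 1)

/-- (AL'): every univalent map of the ball with Runge image is approximable by
automorphisms of `ℂⁿ`. -/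
def AL' (n : ℕ) : Prop :=
  ∀ g : E n → E n, Univalent g (ball 0 1) → IsRunge (g '' ball 0 1) →
    ∃ Φ : ℕ → E n → E n, (∀ k, IsAutomorphism (Φ k)) ∧
      ConvUnifOnCompacts Φ g (ball (0 : E n) 1)

/-- (AL-nec): a map in `S` approximable by automorphisms of `ℂⁿ` has Runge image. -/
def ALnec (n : ℕ) : Prop :=
  ∀ f ∈ classS n,
    (∃ Φ : ℕ → E n → E n, (∀ k, IsAutomorphism (Φ k)) ∧
      ConvUnifOnCompacts Φ f (ball (0 : E n) 1)) →
    IsRunge (f '' ball 0 1)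

/-- [GAL]: every `f ∈ S` with non-Runge image is approximable by entire univalent maps. -/
def GAL (n : ℕ) : Prop :=
  ∀ f ∈ classS n, ¬ IsRunge (f '' ball 0 1) →
    ∃ Ψ : ℕ → E n → E n, (∀ k, Differentiable ℂ (Ψ k) ∧ Function.Injective (Ψ k)) ∧
      ConvUnifOnCompacts Ψ f (ball (0 : E n) 1)

/-- [EXT]: every `f ∈ S` extending univalently past the closed ball is in `S¹`. -/
def EXT (n : ℕ) : Prop :=
  ∀ f ∈ classS n,
    (∃ r > (1 : ℝ), ∃ F : E n → E n, Univalent F (ball 0 r) ∧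
      Set.EqOn F f (ball 0 1)) →
    f ∈ classS1 n

/-- [FBR]: every domain biholomorphic to the ball and not Runge in `ℂⁿ` sits in a
Fatou–Bieberbach domain in a Runge way. -/
def FBR (n : ℕ) : Prop :=
  ∀ D : Set (E n), IsOpen D →
    (∃ g : E n → E n, Univalent g (ball 0 1) ∧ g '' ball 0 1 = D) →
    ¬ IsRunge D →
    ∃ Ω : Set (E n), IsFatouBieberbach Ω ∧ D ⊆ Ω ∧ RungePair D Ω

/-- [GALˢ]: strong generalized Andersén–Lempert. -/
def GALs (n : ℕ) : Prop :=
  ∀ f ∈ classS n, ¬ IsRunge (f '' ball 0 1) →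
    ∃ Ω : Set (E n), IsFatouBieberbach Ω ∧
      ∃ Ψ : ℕ → E n → E n, (∀ k, Ψ k ∈ classSC n ∧ Set.range (Ψ k) = Ω) ∧
        ConvUnifOnCompacts Ψ f (ball (0 : E n) 1)

/-- [FBRₐ]. -/
def FBRa (n : ℕ) : Prop :=
  ∀ f ∈ classS n, ∀ r ∈ Ioo (0 : ℝ) 1,
    ∃ Ω : Set (E n), BiholToCn Ω ∧ f '' ball 0 r ⊆ Ω ∧
      RungePair (f '' ball 0 r) Ω

/-- [GALₐˢ]. -/
def GALas (n : ℕ) : Prop :=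
  ∀ f ∈ classS n, ¬ IsRunge (f '' ball 0 1) → ∀ r ∈ Ioo (0 : ℝ) 1,
    ∃ Ω : Set (E n), IsFatouBieberbach Ω ∧
      ∃ Ψ : ℕ → E n → E n, (∀ k, Ψ k ∈ classSC n ∧ Set.range (Ψ k) = Ω) ∧
        ConvUnifOnCompacts Ψ (rescale f r) (ball (0 : E n) 1)

/-- A domain is entire-convexshapelike if some entire univalent map pulls it back to
a convex set. -/
def EntireConvexshapelike {n : ℕ} (Ω : Set (E n)) : Prop :=
  ∃ Ψ : E n → E n, Differentiable ℂ Ψ ∧ Function.Injective Ψ ∧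
    Ω ⊆ Set.range Ψ ∧ Convex ℝ (Ψ ⁻¹' Ω)

/-- `S¹` is dense in `S` for uniform convergence on compacta. -/
def DenseS1 (n : ℕ) : Prop :=
  ∀ f ∈ classS n, ∃ g : ℕ → E n → E n, (∀ k, g k ∈ classS1 n) ∧
    ConvUnifOnCompacts g f (ball (0 : E n) 1)
section Rescaling

open scoped Pointwise

variable {n : ℕ}

theorem RungePair.image_equiv {D Ω : Set (E n)} (h : RungePair D Ω) (Φ : E n ≃ E n)
    (hΦ : Differentiable ℂ Φ) (hΦsymm : Differentiable ℂ Φ.symm) :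
    RungePair (Φ '' D) (Φ '' Ω) := by
  refine ⟨image_mono h.1, fun u hu => ?_⟩
  obtain ⟨g, hg, hgu⟩ := h.2 (u ∘ Φ) (hu.comp hΦ.differentiableOn (mapsTo_image Φ D))
  refine ⟨fun k => g k ∘ Φ.symm, fun k => (hg k).comp hΦsymm.differentiableOn ?_, ?_⟩
  · rw [Φ.image_eq_preimage_symm]
    exact mapsTo_preimage _ _
  · intro K hKD hK
    have hKD' : Φ.symm '' K ⊆ D := by
      rintro _ ⟨y, hy, rfl⟩
      obtain ⟨x, hx, rfl⟩ := hKD hy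
      simpa using hx
    have := (hgu _ hKD' (hK.image hΦsymm.continuous)).comp Φ.symm
    simpa [Function.comp_def] using this.mono (subset_preimage_image _ _)

theorem RungePair.smul {D Ω : Set (E n)} (h : RungePair D Ω) {c : ℂ} (hc : c ≠ 0) :
    RungePair (c • D) (c • Ω) :=
  h.image_equiv (MulAction.toPerm (Units.mk0 c hc)) (differentiable_id.const_smul c)
    (differentiable_id.const_smul c⁻¹)

theorem BiholToCn.image {Ω : Set (E n)} (h : BiholToCn Ω) {Φ : E n → E n}
    (hΦ : Differentiable ℂ Φ) (hΦinj : Function.Injective Φ) : BiholToCn (Φ '' Ω) := by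
  obtain ⟨Ψ, hΨ, hΨinj, rfl⟩ := h
  exact ⟨Φ ∘ Ψ, hΦ.comp hΨ, hΦinj.comp hΨinj, range_comp Φ Ψ⟩

theorem BiholToCn.smul {Ω : Set (E n)} (h : BiholToCn Ω) {c : ℂ} (hc : c ≠ 0) :
    BiholToCn (c • Ω) :=
  h.image (differentiable_id.const_smul c) (smul_right_injective (E n) hc)

theorem rescale_eq_comp (f : E n → E n) (r : ℝ) :
    rescale f r = (fun w => (r : ℂ)⁻¹ • w) ∘ f ∘ fun z => (r : ℂ) • z := rfl

theorem image_rescale_ball (f : E n → E n) {r : ℝ} (hr : 0 < r) (ρ : ℝ) :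
    rescale f r '' ball 0 ρ = (r : ℂ)⁻¹ • f '' ball 0 (r * ρ) := by
  have hrc : (r : ℂ) ≠ 0 := by exact_mod_cast hr.ne'
  rw [rescale_eq_comp, image_comp, image_comp, image_smul, image_smul, _root_.smul_ball hrc,
    smul_zero, Complex.norm_real, Real.norm_of_nonneg hr.le]

theorem image_ball_eq_smul_image_rescale (f : E n → E n) {r : ℝ} (hr : 0 < r) :
    f '' ball 0 r = (r : ℂ) • rescale f r '' ball 0 1 := by
  have hrc : (r : ℂ) ≠ 0 := by exact_mod_cast hr.ne'
  rw [image_rescale_ball f hr, mul_one, smul_inv_smul₀ hrc]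

theorem Univalent.rescale {f : E n → E n} {ρ : ℝ} (hf : Univalent f (ball 0 ρ)) {r : ℝ}
    (hr : 0 < r) : Univalent (rescale f r) (ball 0 (ρ / r)) := by
  have hrc : (r : ℂ) ≠ 0 := by exact_mod_cast hr.ne'
  have hmaps : MapsTo (fun z : E n => (r : ℂ) • z) (ball 0 (ρ / r)) (ball 0 ρ) := by
    intro z hz
    rw [mem_ball_zero_iff, norm_smul, Complex.norm_real, Real.norm_of_nonneg hr.le]
    rw [mem_ball_zero_iff, lt_div_iff₀' hr] at hz
    exact hz
  refine ⟨?_, ?_⟩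
  · exact (hf.1.comp (differentiable_id.const_smul (r : ℂ)).differentiableOn hmaps).const_smul
      (r : ℂ)⁻¹
  · rw [rescale_eq_comp]
    exact (smul_right_injective (E n) (inv_ne_zero hrc)).comp_injOn
      (hf.2.comp (smul_right_injective (E n) hrc).injOn hmaps)

theorem HasFDerivAt.rescale {f : E n → E n} {f' : E n →L[ℂ] E n} {r : ℝ} {x : E n}
    (hf : HasFDerivAt f f' ((r : ℂ) • x)) (hr : r ≠ 0) : HasFDerivAt (rescale f r) f' x := by
  have hrc : (r : ℂ) ≠ 0 := by exact_mod_cast hr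
  have hderiv : (r : ℂ)⁻¹ • f'.comp ((r : ℂ) • ContinuousLinearMap.id ℂ (E n)) = f' := by
    ext z
    simp [smul_smul, inv_mul_cancel₀ hrc]
  have := (hf.comp x ((hasFDerivAt_id x).const_smul (r : ℂ))).const_smul (r : ℂ)⁻¹
  rwa [hderiv] at this

theorem rescale_mem_classS {f : E n → E n} (hf : f ∈ classS n) {r : ℝ} (hr0 : 0 < r)
    (hr1 : r ≤ 1) : rescale f r ∈ classS n := by
  obtain ⟨hfU, hf0, hfD⟩ := hf
  have hball : ball (0 : E n) 1 ⊆ ball 0 (1 / r) :=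
    ball_subset_ball (by rw [le_div_iff₀ hr0]; linarith)
  have hf' : HasFDerivAt f (ContinuousLinearMap.id ℂ (E n)) ((r : ℂ) • 0) := by
    rw [smul_zero, ← hfD]
    exact (hfU.1.differentiableAt (ball_mem_nhds 0 one_pos)).hasFDerivAt
  refine ⟨⟨(hfU.rescale hr0).1.mono hball, (hfU.rescale hr0).2.mono hball⟩, ?_,
    (hf'.rescale hr0.ne').fderiv⟩
  simp [rescale, hf0]

end Rescaling

theorem stmt10_general (n : ℕ)
    (hrange : ∀ f : ℝ → E n → E n, IsLoewnerChain f → BiholToCn (LoewnerRange f))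
    (hrunge : ∀ f : ℝ → E n → E n, IsLoewnerChain f → ∀ t : ℝ, 0 ≤ t →
      RungePair (f t '' ball 0 1) (LoewnerRange f))
    (hEXT : EXT n) : FBRa n := by
  intro f hf r ⟨hr0, hr1⟩
  have hrc : (r : ℂ) ≠ 0 := by exact_mod_cast hr0.ne'
  have hextends : ∃ ρ > (1 : ℝ), ∃ F : E n → E n, Univalent F (ball 0 ρ) ∧
      EqOn F (rescale f r) (ball 0 1) :=
    ⟨1 / r, by rw [gt_iff_lt, lt_div_iff₀ hr0]; linarith, rescale f r, hf.1.rescale hr0,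
      fun _ _ => rfl⟩
  obtain ⟨-, F, hF, hF0⟩ := hEXT _ (rescale_mem_classS hf hr0 hr1.le) hextends
  have hRP : RungePair (rescale f r '' ball 0 1) (LoewnerRange F) :=
    hF0.image_eq ▸ hrunge F hF 0 le_rfl
  rw [image_ball_eq_smul_image_rescale f hr0]
  exact ⟨_, (hrange F hF).smul hrc, smul_set_mono hRP.1, hRP.smul hrc⟩

/-- assuming that Loewner ranges are biholomorphic to `ℂⁿ` and that
each `(f_t(𝔹ⁿ), R(f_t))` is a Runge pair, [EXT] implies [FBRₐ]. -/
theorem stmt10 (n : ℕ) (hn : 2 ≤ n)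
    (hrange : ∀ f : ℝ → E n → E n, IsLoewnerChain f → BiholToCn (LoewnerRange f))
    (hrunge : ∀ f : ℝ → E n → E n, IsLoewnerChain f → ∀ t : ℝ, 0 ≤ t →
      RungePair (f t '' ball 0 1) (LoewnerRange f))
    (hEXT : EXT n) : FBRa n :=
  stmt10_general n hrange hrunge hEXT
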